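/- arXiv:2005.09865 — 2 statements merged into one kernel-verified Lean document; each statement's English description precedes it below -/
import Mathlib

section
/- Let w ∈ C²(ℝⁿ) be bounded with n ≤ 2 and suppose w·Δw ≥ 0 on ℝⁿ. Then w is constant. -/
open Set

/-- The Laplacian of a function on Euclidean space, as the sum of the pure second
partial derivatives along the coordinate directions. -/
noncomputable def lap {n : ℕ} (w : EuclideanSpace ℝ (Fin n) → ℝ)
    (x : EuclideanSpace ℝ (Fin n)) : ℝ :=
  ∑ i : Fin n,
    fderiv ℝ (fun y => fderiv ℝ w y (EuclideanSpace.single i (1:ℝ))) x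
      (EuclideanSpace.single i (1:ℝ))

open Metric MeasureTheory

section aux

lemma young_ineq {a b ε : ℝ} (hε : 0 < ε) : 2 * a * b ≤ ε * a ^ 2 + (1 / ε) * b ^ 2 := by
  have h := sq_nonneg (ε * a - b)
  have h2 : 0 < ε⁻¹ := inv_pos.2 hε
  have key : 2 * (ε * a) * b ≤ (ε * a) ^ 2 + b ^ 2 := by nlinarith
  have := mul_le_mul_of_nonneg_left key h2.le
  calc 2 * a * b = ε⁻¹ * (2 * (ε * a) * b) := by field_simp
    _ ≤ ε⁻¹ * ((ε * a) ^ 2 + b ^ 2) := this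
    _ = ε * a ^ 2 + (1 / ε) * b ^ 2 := by field_simp

lemma st_deriv_zero_of_neg {x : ℝ} (hx : x < 0) : deriv Real.smoothTransition x = 0 := by
  have h : Real.smoothTransition =ᶠ[nhds x] fun _ => (0:ℝ) := by
    filter_upwards [Iio_mem_nhds hx] with y hy
    exact Real.smoothTransition.zero_of_nonpos (le_of_lt hy)
  rw [h.deriv_eq, deriv_const]

lemma st_deriv_zero_of_one_lt {x : ℝ} (hx : 1 < x) : deriv Real.smoothTransition x = 0 := by
  have h : Real.smoothTransition =ᶠ[nhds x] fun _ => (1:ℝ) := by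
    filter_upwards [Ioi_mem_nhds hx] with y hy
    exact Real.smoothTransition.one_of_one_le (le_of_lt hy)
  rw [h.deriv_eq, deriv_const]

lemma st_deriv_bound : ∃ K : ℝ, ∀ x, |deriv Real.smoothTransition x| ≤ K := by
  have hc : Continuous (deriv Real.smoothTransition) :=
    (Real.smoothTransition.contDiff (n := 2)).continuous_deriv one_le_two
  obtain ⟨K, hK⟩ := (isCompact_Icc (a := (0:ℝ)) (b := 1)).exists_bound_of_continuousOn
    hc.continuousOn
  refine ⟨max K 0, fun x => ?_⟩
  rcases le_or_gt x 0 with hx | hx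
  · rcases eq_or_lt_of_le hx with rfl | hx'
    · exact le_max_of_le_left (by simpa using hK 0 (by simp))
    · simp [st_deriv_zero_of_neg hx']
  rcases le_or_gt x 1 with hx1 | hx1
  · exact le_max_of_le_left (by simpa using hK x ⟨hx.le, hx1⟩)
  · simp [st_deriv_zero_of_one_lt hx1]

end aux

section main

variable {n : ℕ}

local notation "E" => EuclideanSpace ℝ (Fin n)

noncomputable def chi (R : ℝ) (x : E) : ℝ :=
  Real.smoothTransition ((4 - ‖x‖ ^ 2 / R ^ 2) / 3)

lemma chi_nonneg (R : ℝ) (x : E) : 0 ≤ chi R x := Real.smoothTransition.nonneg _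
lemma chi_le_one (R : ℝ) (x : E) : chi R x ≤ 1 := Real.smoothTransition.le_one _

lemma chi_eq_one {R : ℝ} (hR : 0 < R) {x : E} (hx : ‖x‖ ≤ R) : chi R x = 1 := by
  apply Real.smoothTransition.one_of_one_le
  have h1 : ‖x‖ ^ 2 ≤ R ^ 2 := by
    have := norm_nonneg x
    nlinarith
  have hR2 : (0:ℝ) < R ^ 2 := by positivity
  rw [le_div_iff₀ (by norm_num)]
  have : ‖x‖ ^ 2 / R ^ 2 ≤ 1 := (div_le_one hR2).2 h1
  linarith

lemma chi_eq_zero {R : ℝ} (hR : 0 < R) {x : E} (hx : 2 * R ≤ ‖x‖) : chi R x = 0 := by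
  apply Real.smoothTransition.zero_of_nonpos
  have h1 : (2*R) ^ 2 ≤ ‖x‖ ^ 2 := by nlinarith
  have hR2 : (0:ℝ) < R ^ 2 := by positivity
  have : (4:ℝ) ≤ ‖x‖ ^ 2 / R ^ 2 := by
    rw [le_div_iff₀ hR2]; nlinarith
  have h3 : (0:ℝ) < 3 := by norm_num
  apply div_nonpos_of_nonpos_of_nonneg <;> linarith

lemma hasFDerivAt_chi {R : ℝ} (hR : 0 < R) (x : E) :
    HasFDerivAt (chi R)
      ((deriv Real.smoothTransition ((4 - ‖x‖ ^ 2 / R ^ 2) / 3) * (-(1 / (3 * R ^ 2)))) •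
        (2 • (innerSL ℝ x : E →L[ℝ] ℝ))) x := by
  have h1 : HasFDerivAt (fun y : E => ‖y‖ ^ 2) (2 • (innerSL ℝ x : E →L[ℝ] ℝ)) x :=
    (hasStrictFDerivAt_norm_sq x).hasFDerivAt
  have h2 : HasFDerivAt (fun y : E => (4 - ‖y‖ ^ 2 / R ^ 2) / 3)
      ((-(1 / (3 * R ^ 2))) • (2 • (innerSL ℝ x : E →L[ℝ] ℝ))) x := by
    have h0 := ((h1.const_mul (1 / R^2)).const_sub 4).mul_const (1/3)
    have h4 : (fun y : E => (4 - 1 / R ^ 2 * ‖y‖ ^ 2) * (1/3)) =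
        (fun y : E => (4 - ‖y‖ ^ 2 / R ^ 2) / 3) := by
      funext y; ring
    rw [h4] at h0
    refine h0.congr_fderiv ?_
    ext v
    simp only [ContinuousLinearMap.coe_smul', Pi.smul_apply, ContinuousLinearMap.neg_apply,
      smul_eq_mul, ContinuousLinearMap.smul_apply]
    ring
  have h3 : HasDerivAt Real.smoothTransition
      (deriv Real.smoothTransition ((4 - ‖x‖ ^ 2 / R ^ 2) / 3)) ((4 - ‖x‖ ^ 2 / R ^ 2) / 3) :=
    ((Real.smoothTransition.contDiff (n := 1)).differentiable one_ne_zero _).hasDerivAt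
  have := h3.comp_hasFDerivAt x h2
  rw [mul_smul]; exact this

lemma contDiff_chi (R : ℝ) : ContDiff ℝ 1 (chi (n := n) R) :=
  (Real.smoothTransition.contDiff).comp
    ((((contDiff_const (c := (4:ℝ))).sub ((contDiff_norm_sq ℝ).div_const _)).div_const _))

lemma fderiv_chi_apply {R : ℝ} (hR : 0 < R) (x : E) (i : Fin n) :
    fderiv ℝ (chi R) x (EuclideanSpace.single i (1:ℝ)) =
      deriv Real.smoothTransition ((4 - ‖x‖ ^ 2 / R ^ 2) / 3) * (-(1 / (3 * R ^ 2))) *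
        (2 * x i) := by
  rw [(hasFDerivAt_chi hR x).fderiv]
  simp only [ContinuousLinearMap.coe_smul', Pi.smul_apply, ContinuousLinearMap.smul_apply,
    smul_eq_mul]
  have : (innerSL ℝ x : E →L[ℝ] ℝ) (EuclideanSpace.single i (1:ℝ)) = x i := by
    simp [innerSL_apply_apply, EuclideanSpace.inner_single_right]
  rw [this]; ring

lemma fderiv_chi_vanish {R : ℝ} (hR : 0 < R) {x : E} (hx : ‖x‖ < R ∨ 2 * R < ‖x‖) (i : Fin n) :
    fderiv ℝ (chi R) x (EuclideanSpace.single i (1:ℝ)) = 0 := by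
  rw [fderiv_chi_apply hR x i]
  have hR2 : (0:ℝ) < R ^ 2 := by positivity
  rcases hx with hx | hx
  · have h1 : ‖x‖ ^ 2 / R ^ 2 < 1 := by
      rw [div_lt_one hR2]
      have := norm_nonneg x
      nlinarith
    rw [st_deriv_zero_of_one_lt (by linarith)]
    ring
  · have h1 : (4:ℝ) < ‖x‖ ^ 2 / R ^ 2 := by
      rw [lt_div_iff₀ hR2]; nlinarith
    rw [st_deriv_zero_of_neg (by linarith)]
    ring

lemma fderiv_chi_bound {R K : ℝ} (hR : 0 < R) (hK : ∀ t, |deriv Real.smoothTransition t| ≤ K)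
    (x : E) (i : Fin n) :
    |fderiv ℝ (chi R) x (EuclideanSpace.single i (1:ℝ))| ≤ K * (2 / (3 * R ^ 2)) * |x i| := by
  rw [fderiv_chi_apply hR x i, abs_mul, abs_mul]
  have hR2 : (0:ℝ) < R ^ 2 := by positivity
  have h1 : |(-(1 / (3 * R ^ 2)))| = 1 / (3 * R ^ 2) := by
    rw [abs_neg, abs_of_nonneg]; positivity
  have h2 : |2 * x i| = 2 * |x i| := by rw [abs_mul]; norm_num
  rw [h1, h2]
  have h3 := hK ((4 - ‖x‖ ^ 2 / R ^ 2) / 3)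
  calc |deriv Real.smoothTransition ((4 - ‖x‖ ^ 2 / R ^ 2) / 3)| * (1 / (3 * R ^ 2)) *
        (2 * |x i|) ≤ K * (1 / (3 * R ^ 2)) * (2 * |x i|) := by
        have hK0 : 0 ≤ K := le_trans (abs_nonneg _) h3
        gcongr
    _ = K * (2 / (3 * R ^ 2)) * |x i| := by ring

noncomputable def gfun (w : E → ℝ) (i : Fin n) (x : E) : ℝ :=
  fderiv ℝ w x (EuclideanSpace.single i (1:ℝ))

noncomputable def Gsq (w : E → ℝ) (x : E) : ℝ := ∑ i : Fin n, (gfun w i x) ^ 2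

lemma lap_eq (w : E → ℝ) (x : E) :
    lap w x = ∑ i : Fin n, fderiv ℝ (gfun w i) x (EuclideanSpace.single i (1:ℝ)) := rfl

lemma contDiff_gfun {w : E → ℝ} (hw : ContDiff ℝ 2 w) (i : Fin n) :
    ContDiff ℝ 1 (gfun w i) := by
  have h1 : ContDiff ℝ 1 (fderiv ℝ w) := hw.fderiv_right (by norm_num)
  exact ((ContinuousLinearMap.apply ℝ ℝ (EuclideanSpace.single i (1:ℝ))).contDiff).comp h1

lemma continuous_Gsq {w : E → ℝ} (hw : ContDiff ℝ 2 w) : Continuous (Gsq w) := by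
  apply continuous_finset_sum
  intro i _
  exact ((contDiff_gfun hw i).continuous).pow 2

lemma Gsq_nonneg (w : E → ℝ) (x : E) : 0 ≤ Gsq w x :=
  Finset.sum_nonneg fun _ _ => sq_nonneg _

lemma integrable_of_zero_outside {f : E → ℝ} (hf : Continuous f) {r : ℝ}
    (h0 : ∀ x : E, r < ‖x‖ → f x = 0) : Integrable f (volume : Measure E) := by
  have hcs : HasCompactSupport f := by
    apply HasCompactSupport.intro (isCompact_closedBall (0:E) r)
    intro x hx
    simp only [mem_closedBall, dist_zero_right, not_le] at hx
    exact h0 x hx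
  exact hf.integrable_of_hasCompactSupport hcs

lemma sum_coord_sq (x : E) : ∑ i : Fin n, (x i) ^ 2 = ‖x‖ ^ 2 := by
  rw [EuclideanSpace.norm_eq, Real.sq_sqrt (by positivity)]
  simp [Real.norm_eq_abs, sq_abs]

end main

section key

variable {n : ℕ}
local notation "E" => EuclideanSpace ℝ (Fin n)

set_option maxHeartbeats 2000000 in
lemma key_estimate {w : E → ℝ} (hw : ContDiff ℝ 2 w) {C K : ℝ}
    (hC : ∀ x, |w x| ≤ C)
    (hK : ∀ t, |deriv Real.smoothTransition t| ≤ K)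
    (hlap : ∀ x, 0 ≤ w x * lap w x)
    (hn : n ≤ 2) {R : ℝ} (hR : 1 ≤ R) :
    (∀ ε : ℝ, 0 < ε →
      (∫ x in ball (0:E) R, Gsq w x) ≤
        ε * (∫ x in closedBall (0:E) (2*R) \ ball (0:E) R, Gsq w x) +
        (1/ε) * (C^2 * (64*K^2/9) * (volume (closedBall (0:E) 1)).toReal)) ∧
    (∫ x in ball (0:E) R, Gsq w x) ≤
        4 * (C^2 * (64*K^2/9) * (volume (closedBall (0:E) 1)).toReal) := by
  have hR0 : (0:ℝ) < R := lt_of_lt_of_le one_pos hR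
  have hC0 : 0 ≤ C := le_trans (abs_nonneg _) (hC 0)
  have hK0 : 0 ≤ K := le_trans (abs_nonneg _) (hK 0)
  set V : ℝ := (volume (closedBall (0:E) 1)).toReal with hV
  have hV0 : 0 ≤ V := ENNReal.toReal_nonneg
  set e : Fin n → E := fun i => EuclideanSpace.single i (1:ℝ) with he
  set u : E → ℝ := fun x => chi R x * chi R x with hu
  set f : E → ℝ := fun x => u x * w x with hf
  set Ann : Set E := closedBall (0:E) (2*R) \ ball (0:E) R with hAnn
  set SB : E → ℝ := Ann.indicator (fun _ => C^2 * (16*K^2/(9*R^2))) with hSB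
  -- regularity facts
  have hχ1 : ContDiff ℝ 1 (chi (n := n) R) := contDiff_chi R
  have hu1 : ContDiff ℝ 1 u := hχ1.mul hχ1
  have hw1 : ContDiff ℝ 1 w := hw.of_le one_le_two
  have hf1 : ContDiff ℝ 1 f := hu1.mul hw1
  have hwd : Differentiable ℝ w := hw1.differentiable one_ne_zero
  have hχd : Differentiable ℝ (chi (n := n) R) := hχ1.differentiable one_ne_zero
  have hud : Differentiable ℝ u := hu1.differentiable one_ne_zero
  have hfd : Differentiable ℝ f := hf1.differentiable one_ne_zero
  have hgd : ∀ i, Differentiable ℝ (gfun w i) := fun i => (contDiff_gfun hw i).differentiable one_ne_zero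
  have hgc : ∀ i, Continuous (gfun w i) := fun i => (hgd i).continuous
  have hGc : Continuous (Gsq w) := continuous_Gsq hw
  -- derivative formulas
  have hDu : ∀ (x : E) (i : Fin n), fderiv ℝ u x (e i) =
      2 * chi R x * fderiv ℝ (chi R) x (e i) := by
    intro x i
    have := fderiv_mul (𝕜 := ℝ) (hχd x) (hχd x)
    rw [hu]
    rw [show (fun x => chi R x * chi R x) = chi R * chi R from rfl, this]
    simp only [ContinuousLinearMap.add_apply, ContinuousLinearMap.coe_smul', Pi.smul_apply,
      smul_eq_mul]
    ring
  have hDf : ∀ (x : E) (i : Fin n), fderiv ℝ f x (e i) =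
      u x * gfun w i x + w x * fderiv ℝ u x (e i) := by
    intro x i
    have := fderiv_mul (𝕜 := ℝ) (hud x) (hwd x)
    rw [hf]
    rw [show (fun x => u x * w x) = u * w from rfl, this]
    simp only [ContinuousLinearMap.add_apply, ContinuousLinearMap.coe_smul', Pi.smul_apply,
      smul_eq_mul]
    rfl

  -- support facts
  have hfz : ∀ x : E, 2*R < ‖x‖ → f x = 0 := by
    intro x hx
    simp [hf, hu, chi_eq_zero hR0 hx.le]
  have hdfz : ∀ x : E, 2*R < ‖x‖ → fderiv ℝ f x = 0 := by
    intro x hx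
    have hopen : IsOpen {y : E | 2*R < ‖y‖} := isOpen_lt continuous_const continuous_norm
    have hev : f =ᶠ[nhds x] fun _ => (0:ℝ) := by
      filter_upwards [hopen.mem_nhds hx] with y hy
      exact hfz y hy
    rw [hev.fderiv_eq]
    exact fderiv_const_apply 0
  -- continuity of derivative maps
  have hdfc : ∀ i, Continuous fun x => fderiv ℝ f x (e i) := fun i =>
    (ContinuousLinearMap.apply ℝ ℝ (e i)).continuous.comp (hf1.continuous_fderiv one_ne_zero)
  have hdgc : ∀ i, Continuous fun x => fderiv ℝ (gfun w i) x (e i) := fun i =>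
    (ContinuousLinearMap.apply ℝ ℝ (e i)).continuous.comp
      ((contDiff_gfun hw i).continuous_fderiv one_ne_zero)
  have hduc : Continuous fun x => fderiv ℝ u x := hu1.continuous_fderiv one_ne_zero
  have hχc : Continuous (chi (n := n) R) := hχ1.continuous
  have hDχc : ∀ i, Continuous fun x => fderiv ℝ (chi R) x (e i) := fun i =>
    (ContinuousLinearMap.apply ℝ ℝ (e i)).continuous.comp (hχ1.continuous_fderiv one_ne_zero)
  have hfc : Continuous f := hf1.continuous
  -- integrability for IBP
  have int1 : ∀ i, Integrable (fun x => f x * fderiv ℝ (gfun w i) x (e i)) := by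
    intro i
    apply integrable_of_zero_outside (hfc.mul (hdgc i))
    intro x hx; simp only [Pi.mul_apply]; rw [hfz x hx, zero_mul]
  have int2 : ∀ i, Integrable (fun x => fderiv ℝ f x (e i) * gfun w i x) := by
    intro i
    apply integrable_of_zero_outside ((hdfc i).mul (hgc i))
    intro x hx; simp only [Pi.mul_apply]; rw [hdfz x hx]; simp
  have int3 : ∀ i, Integrable (fun x => f x * gfun w i x) := by
    intro i
    apply integrable_of_zero_outside (hfc.mul (hgc i))
    intro x hx; simp only [Pi.mul_apply]; rw [hfz x hx, zero_mul]
  -- integration by parts in each direction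
  have ibp : ∀ i, (∫ x, f x * fderiv ℝ (gfun w i) x (e i)) =
      - ∫ x, fderiv ℝ f x (e i) * gfun w i x := fun i =>
    integral_mul_fderiv_eq_neg_fderiv_mul_of_integrable (int2 i) (int1 i) (int3 i) (fun x _ => hfd x) (fun x _ => hgd i x)
  -- the summed identity
  have sum_lhs : (∫ x, f x * lap w x) = ∑ i : Fin n, ∫ x, f x * fderiv ℝ (gfun w i) x (e i) := by
    rw [← integral_finset_sum _ (fun i _ => int1 i)]
    congr 1; funext x
    rw [lap_eq, Finset.mul_sum]
  set W : E → ℝ := fun x =>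
    w x * ∑ i : Fin n, 2 * chi R x * fderiv ℝ (chi R) x (e i) * gfun w i x with hW
  have decomp : ∀ x : E, (∑ i : Fin n, fderiv ℝ f x (e i) * gfun w i x) =
      u x * Gsq w x + W x := by
    intro x
    have h1 : ∀ i : Fin n, fderiv ℝ f x (e i) * gfun w i x =
        u x * (gfun w i x)^2 + w x * (2 * chi R x * fderiv ℝ (chi R) x (e i) * gfun w i x) := by
      intro i
      rw [hDf x i, hDu x i]; ring
    rw [Finset.sum_congr rfl (fun i _ => h1 i), Finset.sum_add_distrib, ← Finset.mul_sum,
      ← Finset.mul_sum]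
    rfl
  have intU : Integrable (fun x => u x * Gsq w x) := by
    apply integrable_of_zero_outside (r := 2*R) ((hχc.mul hχc).mul hGc)
    intro x hx
    simp [hu, chi_eq_zero hR0 hx.le]
  have intW : Integrable W := by
    apply integrable_of_zero_outside (r := 2*R)
      (hw1.continuous.mul (continuous_finset_sum _ (fun i _ =>
        ((continuous_const.mul hχc).mul (hDχc i)).mul (hgc i))))
    intro x hx
    show w x * (∑ i : Fin n, 2 * chi R x * fderiv ℝ (chi R) x (e i) * gfun w i x) = 0
    have : ∀ i : Fin n, 2 * chi R x * fderiv ℝ (chi R) x (e i) * gfun w i x = 0 := by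
      intro i
      rw [fderiv_chi_vanish hR0 (Or.inr hx) i]
      ring
    rw [Finset.sum_congr rfl (fun i _ => this i), Finset.sum_const_zero, mul_zero]
  have main_id : (∫ x, f x * lap w x) = - ((∫ x, u x * Gsq w x) + ∫ x, W x) := by
    rw [sum_lhs, Finset.sum_congr rfl (fun i _ => ibp i), Finset.sum_neg_distrib,
      ← integral_finset_sum _ (fun i _ => int2 i)]
    congr 1
    rw [← integral_add intU intW]
    congr 1
    funext x
    exact decomp x
  have hflap_nonneg : 0 ≤ ∫ x, f x * lap w x := by
    apply integral_nonneg
    intro x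
    show 0 ≤ f x * lap w x
    have hfx : f x * lap w x = (chi R x * chi R x) * (w x * lap w x) := by
      show (chi R x * chi R x) * w x * lap w x = _; ring
    rw [hfx]
    exact mul_nonneg (mul_nonneg (chi_nonneg R x) (chi_nonneg R x)) (hlap x)
  have hUleW : (∫ x, u x * Gsq w x) ≤ ∫ x, |W x| := by
    have h1 : (∫ x, u x * Gsq w x) ≤ - ∫ x, W x := by
      have := main_id
      linarith [hflap_nonneg, this.symm.le, this.le]
    calc (∫ x, u x * Gsq w x) ≤ - ∫ x, W x := h1
      _ ≤ |∫ x, W x| := neg_le_abs _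
      _ ≤ ∫ x, |W x| := by
          simpa [Real.norm_eq_abs] using norm_integral_le_integral_norm (μ := volume) W

  -- measurability of the annulus, positivity facts
  have hAnnMeas : MeasurableSet Ann := measurableSet_closedBall.diff measurableSet_ball
  have hSBval : (0:ℝ) ≤ C^2 * (16*K^2/(9*R^2)) := by positivity
  have hSB_nonneg : ∀ x : E, 0 ≤ SB x := fun x => indicator_nonneg (fun y _ => hSBval) x
  have hIndG_nonneg : ∀ x : E, 0 ≤ Ann.indicator (Gsq w) x := fun x =>
    indicator_nonneg (fun y _ => Gsq_nonneg w y) x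
  -- the pointwise bound on |W|
  have hWpt : ∀ ε' : ℝ, 0 < ε' → ∀ x : E,
      |W x| ≤ ε' * (u x * Gsq w x) + (1/ε') * SB x ∧
      |W x| ≤ ε' * Ann.indicator (Gsq w) x + (1/ε') * SB x := by
    intro ε' hε' x
    by_cases hxA : x ∈ Ann
    · obtain ⟨hx1, hx2⟩ := hxA
      rw [mem_closedBall, dist_zero_right] at hx1
      rw [mem_ball, dist_zero_right, not_lt] at hx2
      have term_bound : ∀ i : Fin n,
          |w x * (2 * chi R x * fderiv ℝ (chi R) x (e i) * gfun w i x)| ≤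
            ε' * ((chi R x * chi R x) * (gfun w i x)^2) +
            (1/ε') * ((w x)^2 * (fderiv ℝ (chi R) x (e i))^2) := by
        intro i
        have h2 := young_ineq (a := chi R x * |gfun w i x|)
          (b := |w x| * |fderiv ℝ (chi R) x (e i)|) hε'
        have habs : |w x * (2 * chi R x * fderiv ℝ (chi R) x (e i) * gfun w i x)|
            = 2 * (chi R x * |gfun w i x|) * (|w x| * |fderiv ℝ (chi R) x (e i)|) := by
          simp only [abs_mul, abs_two, abs_of_nonneg (chi_nonneg R x)]
          ring
        rw [habs]
        calc 2 * (chi R x * |gfun w i x|) * (|w x| * |fderiv ℝ (chi R) x (e i)|) ≤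
              ε' * (chi R x * |gfun w i x|)^2 + (1/ε') * (|w x| * |fderiv ℝ (chi R) x (e i)|)^2 :=
              h2
          _ = ε' * ((chi R x * chi R x) * (gfun w i x)^2) +
              (1/ε') * ((w x)^2 * (fderiv ℝ (chi R) x (e i))^2) := by
              rw [mul_pow, mul_pow, sq_abs, sq_abs, sq_abs]
              ring_nf
      have habs_sum : |W x| ≤ ∑ i : Fin n,
          |w x * (2 * chi R x * fderiv ℝ (chi R) x (e i) * gfun w i x)| := by
        show |w x * ∑ i : Fin n, 2 * chi R x * fderiv ℝ (chi R) x (e i) * gfun w i x| ≤ _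
        rw [Finset.mul_sum]
        exact Finset.abs_sum_le_sum_abs _ _
      have hDsum : (∑ i : Fin n, (w x)^2 * (fderiv ℝ (chi R) x (e i))^2) ≤
          C^2 * (16*K^2/(9*R^2)) := by
        have hterm : ∀ i : Fin n, (w x)^2 * (fderiv ℝ (chi R) x (e i))^2 ≤
            C^2 * ((K * (2 / (3 * R ^ 2)))^2 * (x i)^2) := by
          intro i
          have hw2 : (w x)^2 ≤ C^2 := by
            rw [← sq_abs]
            exact pow_le_pow_left₀ (abs_nonneg _) (hC x) 2
          have hD2 : (fderiv ℝ (chi R) x (e i))^2 ≤ (K * (2 / (3 * R ^ 2)))^2 * (x i)^2 := by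
            rw [← sq_abs (fderiv ℝ (chi R) x (e i)), ← sq_abs (x i), ← mul_pow]
            apply pow_le_pow_left₀ (abs_nonneg _)
            exact fderiv_chi_bound hR0 hK x i
          calc (w x)^2 * (fderiv ℝ (chi R) x (e i))^2 ≤
                C^2 * (fderiv ℝ (chi R) x (e i))^2 := by
                apply mul_le_mul_of_nonneg_right hw2 (sq_nonneg _)
            _ ≤ C^2 * ((K * (2 / (3 * R ^ 2)))^2 * (x i)^2) := by
                apply mul_le_mul_of_nonneg_left hD2 (by positivity)
        calc (∑ i : Fin n, (w x)^2 * (fderiv ℝ (chi R) x (e i))^2) ≤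
              ∑ i : Fin n, C^2 * ((K * (2 / (3 * R ^ 2)))^2 * (x i)^2) :=
              Finset.sum_le_sum (fun i _ => hterm i)
          _ = C^2 * (K * (2 / (3 * R ^ 2)))^2 * ‖x‖^2 := by
              rw [← Finset.mul_sum, ← Finset.mul_sum, sum_coord_sq, mul_assoc]
          _ ≤ C^2 * (K * (2 / (3 * R ^ 2)))^2 * (2*R)^2 := by
              apply mul_le_mul_of_nonneg_left _ (by positivity)
              have h0 : (0:ℝ) ≤ ‖x‖ := norm_nonneg _
              nlinarith
          _ = C^2 * (16*K^2/(9*R^2)) := by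
              field_simp
              ring
      have hmain : |W x| ≤ ε' * ((chi R x * chi R x) * Gsq w x) +
          (1/ε') * (C^2 * (16*K^2/(9*R^2))) := by
        calc |W x| ≤ ∑ i : Fin n,
              |w x * (2 * chi R x * fderiv ℝ (chi R) x (e i) * gfun w i x)| := habs_sum
          _ ≤ ∑ i : Fin n, (ε' * ((chi R x * chi R x) * (gfun w i x)^2) +
              (1/ε') * ((w x)^2 * (fderiv ℝ (chi R) x (e i))^2)) :=
              Finset.sum_le_sum (fun i _ => term_bound i)
          _ = ε' * ((chi R x * chi R x) * Gsq w x) +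
              (1/ε') * ∑ i : Fin n, (w x)^2 * (fderiv ℝ (chi R) x (e i))^2 := by
              rw [Finset.sum_add_distrib, ← Finset.mul_sum, ← Finset.mul_sum, ← Finset.mul_sum]
              rfl
          _ ≤ ε' * ((chi R x * chi R x) * Gsq w x) + (1/ε') * (C^2 * (16*K^2/(9*R^2))) := by
              have := mul_le_mul_of_nonneg_left hDsum (le_of_lt (by positivity : (0:ℝ) < 1/ε'))
              linarith
      have hmemA : x ∈ Ann := by
        rw [hAnn]
        constructor
        · rw [mem_closedBall, dist_zero_right]; exact hx1
        · rw [mem_ball, dist_zero_right]; exact not_lt.2 hx2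
      have hSBx : SB x = C^2 * (16*K^2/(9*R^2)) := indicator_of_mem hmemA _
      have hIGx : Ann.indicator (Gsq w) x = Gsq w x := indicator_of_mem hmemA _
      constructor
      · rw [hSBx]
        exact hmain
      · rw [hSBx, hIGx]
        have huG : (chi R x * chi R x) * Gsq w x ≤ Gsq w x := by
          have h1 : chi R x * chi R x ≤ 1 :=
            mul_le_one₀ (chi_le_one R x) (chi_nonneg R x) (chi_le_one R x)
          nlinarith [Gsq_nonneg w x]
        have := mul_le_mul_of_nonneg_left huG hε'.le
        linarith
    · -- outside the annulus the left side vanishes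
      have hout : ‖x‖ < R ∨ 2*R < ‖x‖ := by
        rw [hAnn, mem_diff] at hxA
        push_neg at hxA
        by_cases hcb : x ∈ closedBall (0:E) (2*R)
        · left
          have := hxA hcb
          rwa [mem_ball, dist_zero_right] at this
        · right
          rw [mem_closedBall, dist_zero_right, not_le] at hcb
          exact hcb
      have hW0 : W x = 0 := by
        show w x * (∑ i : Fin n, 2 * chi R x * fderiv ℝ (chi R) x (e i) * gfun w i x) = 0
        have : ∀ i : Fin n, 2 * chi R x * fderiv ℝ (chi R) x (e i) * gfun w i x = 0 := by
          intro i
          rw [fderiv_chi_vanish hR0 hout i]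
          ring
        rw [Finset.sum_congr rfl (fun i _ => this i), Finset.sum_const_zero, mul_zero]
      rw [hW0, abs_zero]
      constructor
      · have h1 : 0 ≤ u x * Gsq w x :=
          mul_nonneg (mul_nonneg (chi_nonneg R x) (chi_nonneg R x)) (Gsq_nonneg w x)
        have h2 := hSB_nonneg x
        positivity
      · have h1 := hIndG_nonneg x
        have h2 := hSB_nonneg x
        positivity

  -- integrability of the bounding functions
  have hAnnSub : Ann ⊆ closedBall (0:E) (2*R) := diff_subset
  have hAnnFin : volume Ann < ⊤ :=
    lt_of_le_of_lt (measure_mono hAnnSub) measure_closedBall_lt_top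
  have intSB : Integrable SB := by
    rw [hSB]
    rw [integrable_indicator_iff hAnnMeas]
    exact integrableOn_const hAnnFin.ne
  have hGint_cb : IntegrableOn (Gsq w) (closedBall (0:E) (2*R)) :=
    hGc.continuousOn.integrableOn_compact (isCompact_closedBall _ _)
  have hGint_Ann : IntegrableOn (Gsq w) Ann := hGint_cb.mono_set hAnnSub
  have intIndG : Integrable (Ann.indicator (Gsq w)) :=
    (integrable_indicator_iff hAnnMeas).2 hGint_Ann
  -- bound on the integral of SB
  have hSBint : (∫ x, SB x) ≤ C^2 * (64*K^2/9) * V := by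
    rw [hSB, integral_indicator hAnnMeas, setIntegral_const, smul_eq_mul]
    have h1 : (volume Ann).toReal ≤ 4*R^2 * V := by
      have h2 : volume (closedBall (0:E) (2*R)) =
          ENNReal.ofReal ((2*R)^n) * volume (closedBall (0:E) 1) := by
        rw [Measure.addHaar_closedBall' volume (0:E) (by positivity : (0:ℝ) ≤ 2*R),
          finrank_euclideanSpace_fin]
      have h3 : (volume Ann).toReal ≤ (volume (closedBall (0:E) (2*R))).toReal :=
        ENNReal.toReal_mono measure_closedBall_lt_top.ne (measure_mono hAnnSub)
      rw [h2, ENNReal.toReal_mul, ENNReal.toReal_ofReal (by positivity)] at h3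
      have h4 : (2*R)^n ≤ 4*R^2 := by
        calc (2*R)^n ≤ (2*R)^2 := pow_le_pow_right₀ (by linarith) hn
          _ = 4*R^2 := by ring
      calc (volume Ann).toReal ≤ (2*R)^n * V := h3
        _ ≤ 4*R^2 * V := mul_le_mul_of_nonneg_right h4 hV0
    calc (volume Ann).toReal * (C^2 * (16*K^2/(9*R^2))) ≤
          (4*R^2*V) * (C^2 * (16*K^2/(9*R^2))) := mul_le_mul_of_nonneg_right h1 hSBval
      _ = C^2 * (64*K^2/9) * V := by field_simp; ring
  -- the ball integral is dominated by the weighted one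
  have hballInt : (∫ x in ball (0:E) R, Gsq w x) ≤ ∫ x, u x * Gsq w x := by
    have h1 : (∫ x in ball (0:E) R, Gsq w x) = ∫ x in ball (0:E) R, u x * Gsq w x := by
      apply setIntegral_congr_fun measurableSet_ball
      intro x hx
      rw [mem_ball, dist_zero_right] at hx
      show Gsq w x = chi R x * chi R x * Gsq w x
      rw [chi_eq_one hR0 hx.le]
      ring
    rw [h1]
    apply setIntegral_le_integral intU
    filter_upwards with x
    exact mul_nonneg (mul_nonneg (chi_nonneg R x) (chi_nonneg R x)) (Gsq_nonneg w x)
  constructor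
  · -- the ε-version
    intro ε hε
    have hptb : ∀ x, |W x| ≤ ε * Ann.indicator (Gsq w) x + (1/ε) * SB x :=
      fun x => (hWpt ε hε x).2
    have hRHSint : Integrable (fun x => ε * Ann.indicator (Gsq w) x + (1/ε) * SB x) :=
      (intIndG.const_mul ε).add (intSB.const_mul (1/ε))
    have h2 : (∫ x, |W x|) ≤ ∫ x, (ε * Ann.indicator (Gsq w) x + (1/ε) * SB x) :=
      integral_mono intW.abs hRHSint hptb
    have h3 : (∫ x, (ε * Ann.indicator (Gsq w) x + (1/ε) * SB x)) =
        ε * (∫ x in Ann, Gsq w x) + (1/ε) * ∫ x, SB x := by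
      rw [integral_add (intIndG.const_mul ε) (intSB.const_mul (1/ε)),
        integral_const_mul, integral_const_mul, integral_indicator hAnnMeas]
    have h4 : (1/ε) * (∫ x, SB x) ≤ (1/ε) * (C^2 * (64*K^2/9) * V) :=
      mul_le_mul_of_nonneg_left hSBint (by positivity)
    have h5 := hUleW
    linarith [hballInt]
  · -- the uniform bound, taking ε' = 1/2
    have hptb : ∀ x, |W x| ≤ (1/2) * (u x * Gsq w x) + 2 * SB x := by
      intro x
      have h := (hWpt (1/2) one_half_pos x).1
      have h2 : (1/(1/2:ℝ)) = 2 := by norm_num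
      rw [h2] at h
      exact h
    have hRHSint : Integrable (fun x => (1/2) * (u x * Gsq w x) + 2 * SB x) :=
      (intU.const_mul _).add (intSB.const_mul _)
    have h2 : (∫ x, |W x|) ≤ ∫ x, ((1/2) * (u x * Gsq w x) + 2 * SB x) :=
      integral_mono intW.abs hRHSint hptb
    have h3 : (∫ x, ((1/2) * (u x * Gsq w x) + 2 * SB x)) =
        (1/2) * (∫ x, u x * Gsq w x) + 2 * ∫ x, SB x := by
      rw [integral_add (intU.const_mul _) (intSB.const_mul _),
        integral_const_mul, integral_const_mul]
    linarith [hUleW, hSBint, hballInt]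




end key

section endgame

variable {n : ℕ}
local notation "E" => EuclideanSpace ℝ (Fin n)

lemma Gsq_eq_zero {w : E → ℝ} (hw : ContDiff ℝ 2 w) {C K : ℝ}
    (hC : ∀ x, |w x| ≤ C)
    (hK : ∀ t, |deriv Real.smoothTransition t| ≤ K)
    (hlap : ∀ x, 0 ≤ w x * lap w x)
    (hn : n ≤ 2) : ∀ x : E, Gsq w x = 0 := by
  set V : ℝ := (volume (closedBall (0:E) 1)).toReal with hV
  set B : ℝ := C^2 * (64*K^2/9) * V with hB
  have hC0 : 0 ≤ C := le_trans (abs_nonneg _) (hC 0)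
  have hK0 : 0 ≤ K := le_trans (abs_nonneg _) (hK 0)
  have hV0 : 0 ≤ V := ENNReal.toReal_nonneg
  have hB0 : 0 ≤ B := by positivity
  have hGc : Continuous (Gsq w) := continuous_Gsq hw
  have hGnn : ∀ x : E, 0 ≤ Gsq w x := Gsq_nonneg w
  have hGint : ∀ r : ℝ, IntegrableOn (Gsq w) (ball (0:E) r) :=
    fun r => (hGc.continuousOn.integrableOn_compact (isCompact_closedBall _ _)).mono_set
      ball_subset_closedBall
  set a : ℝ → ℝ := fun r => ∫ x in ball (0:E) r, Gsq w x with ha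
  have ha_nonneg : ∀ r, 0 ≤ a r := fun r =>
    setIntegral_nonneg measurableSet_ball (fun x _ => hGnn x)
  have ha_mono : ∀ ⦃r s : ℝ⦄, r ≤ s → a r ≤ a s := by
    intro r s hrs
    apply setIntegral_mono_set (hGint s)
    · filter_upwards with x using hGnn x
    · exact HasSubset.Subset.eventuallyLE (ball_subset_ball hrs)
  have hbdd : ∀ r, a r ≤ 4 * B := by
    intro r
    have h1 : a r ≤ a (max r 1) := ha_mono (le_max_left _ _)
    have h2 := (key_estimate hw hC hK hlap hn (le_max_right r 1)).2
    exact le_trans h1 h2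
  have hBdd : BddAbove (Set.range fun k : ℕ => a k) := by
    refine ⟨4 * B, ?_⟩
    rintro x ⟨k, rfl⟩
    exact hbdd k
  set T : ℝ := ⨆ k : ℕ, a k with hT
  have haT : ∀ r, a r ≤ T := by
    intro r
    calc a r ≤ a ⌈r⌉₊ := ha_mono (Nat.le_ceil r)
      _ ≤ T := le_ciSup hBdd ⌈r⌉₊
  have hT0 : 0 ≤ T := le_trans (ha_nonneg 0) (haT 0)
  -- tail estimate and the limiting argument
  have hTail : ∀ ε : ℝ, 0 < ε → ∀ δ : ℝ, 0 < δ → T ≤ δ + ε * δ + (1/ε) * B := by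
    intro ε hε δ hδ
    obtain ⟨k₀, hk₀⟩ : ∃ k : ℕ, T - δ < a k := by
      have h1 : T - δ < T := by linarith
      obtain ⟨k, hk⟩ := exists_lt_of_lt_ciSup h1
      exact ⟨k, hk⟩
    set R : ℝ := max (k₀ : ℝ) 1 with hR
    have hR1 : (1:ℝ) ≤ R := le_max_right _ _
    have hRk : (k₀ : ℝ) ≤ R := le_max_left _ _
    have haR : T - δ < a R := lt_of_lt_of_le hk₀ (ha_mono hRk)
    have key := (key_estimate hw hC hK hlap hn hR1).1 ε hε
    -- the annulus integral is at most a (2R+1) - a R ≤ δ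
    have hann : (∫ x in closedBall (0:E) (2*R) \ ball (0:E) R, Gsq w x) ≤ a (2*R+1) - a R := by
      have hsub : closedBall (0:E) (2*R) \ ball (0:E) R ⊆
          ball (0:E) (2*R+1) \ ball (0:E) R := by
        apply diff_subset_diff_left
        intro x hx
        rw [mem_closedBall, dist_zero_right] at hx
        rw [mem_ball, dist_zero_right]
        linarith
      have h1 : (∫ x in closedBall (0:E) (2*R) \ ball (0:E) R, Gsq w x) ≤
          ∫ x in ball (0:E) (2*R+1) \ ball (0:E) R, Gsq w x := by
        apply setIntegral_mono_set ((hGint (2*R+1)).mono_set diff_subset)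
        · filter_upwards with x using hGnn x
        · exact HasSubset.Subset.eventuallyLE hsub
      have h2 : (∫ x in ball (0:E) (2*R+1) \ ball (0:E) R, Gsq w x) = a (2*R+1) - a R := by
        rw [ha]
        rw [integral_diff measurableSet_ball (hGint (2*R+1))
          (ball_subset_ball (by linarith))]
      linarith
    have htail : a (2*R+1) - a R ≤ δ := by
      have := haT (2*R+1)
      linarith
    have hannδ : (∫ x in closedBall (0:E) (2*R) \ ball (0:E) R, Gsq w x) ≤ δ := le_trans hann htail
    have h3 : a R ≤ ε * δ + (1/ε) * B := by
      have h4 : ε * (∫ x in closedBall (0:E) (2*R) \ ball (0:E) R, Gsq w x) ≤ ε * δ :=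
        mul_le_mul_of_nonneg_left hannδ hε.le
      calc a R ≤ ε * (∫ x in closedBall (0:E) (2*R) \ ball (0:E) R, Gsq w x) + (1/ε) * B := key
        _ ≤ ε * δ + (1/ε) * B := by linarith
    linarith
  have hTle : ∀ ε : ℝ, 0 < ε → T ≤ (1/ε) * B := by
    intro ε hε
    apply le_of_forall_pos_le_add
    intro θ hθ
    have hδ : 0 < θ / (1 + ε) := by positivity
    have := hTail ε hε (θ / (1 + ε)) hδ
    have h1 : θ / (1 + ε) + ε * (θ / (1 + ε)) = θ := by field_simp
    linarith
  have hTzero : T ≤ 0 := by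
    apply le_of_forall_pos_le_add
    intro θ hθ
    rcases eq_or_lt_of_le hB0 with hBz | hBz
    · have := hTle 1 one_pos
      rw [← hBz] at this
      simpa using le_trans this (by linarith)
    · have hε : 0 < B / θ := by positivity
      have := hTle (B / θ) hε
      have h1 : (1/(B/θ)) * B = θ := by field_simp
      linarith
  -- all ball integrals vanish
  have hazero : ∀ r, a r = 0 := fun r => le_antisymm (le_trans (haT r) hTzero) (ha_nonneg r)
  -- hence G vanishes identically
  intro x₀
  by_contra hne
  have hpos : 0 < Gsq w x₀ := lt_of_le_of_ne (hGnn x₀) (Ne.symm hne)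
  set c : ℝ := Gsq w x₀ with hc
  set s : Set E := {y | c/2 < Gsq w y} ∩ ball x₀ 1 with hs
  have hs_open : IsOpen s := (isOpen_lt continuous_const hGc).inter isOpen_ball
  have hx₀s : x₀ ∈ s := ⟨by simpa [hc] using by linarith, mem_ball_self one_pos⟩
  set r : ℝ := ‖x₀‖ + 1 with hr
  have hsub : s ⊆ ball (0:E) r := by
    rintro y ⟨_, hy⟩
    rw [mem_ball] at hy
    rw [mem_ball, dist_zero_right]
    calc ‖y‖ ≤ ‖x₀‖ + ‖y - x₀‖ := by
          have := norm_sub_norm_le y x₀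
          have h2 := norm_sub_rev y x₀
          linarith [abs_norm_sub_norm_le y x₀, norm_sub_norm_le y x₀]
      _ < ‖x₀‖ + 1 := by
          rw [← dist_eq_norm]
          linarith [hy]
  have hsfin : volume s < ⊤ :=
    lt_of_le_of_lt (measure_mono (hsub.trans ball_subset_closedBall)) measure_closedBall_lt_top
  have hspos : 0 < (volume s).toReal :=
    ENNReal.toReal_pos (hs_open.measure_ne_zero volume ⟨x₀, hx₀s⟩) hsfin.ne
  have h1 : (∫ x in s, Gsq w x) ≤ a r := by
    apply setIntegral_mono_set (hGint r)
    · filter_upwards with x using hGnn x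
    · exact HasSubset.Subset.eventuallyLE hsub
  have h2 : c/2 * (volume s).toReal ≤ ∫ x in s, Gsq w x := by
    apply setIntegral_ge_of_const_le_real hs_open.measurableSet hsfin.ne
    · intro x hx
      exact (hx.1).le
    · exact (hGint r).mono_set hsub
  rw [hazero r] at h1
  nlinarith
end endgame

theorem liouville_dim_le_two (n : ℕ) (hn : n ≤ 2)
    (w : EuclideanSpace ℝ (Fin n) → ℝ)
    (hw : ContDiff ℝ 2 w)
    (hb : ∃ C : ℝ, ∀ x, |w x| ≤ C)
    (h : ∀ x, 0 ≤ w x * lap w x) :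
    ∀ x y, w x = w y := by
  obtain ⟨C, hC⟩ := hb
  obtain ⟨K, hK⟩ := st_deriv_bound
  have hG := Gsq_eq_zero hw hC hK h hn
  have hg0 : ∀ (x : EuclideanSpace ℝ (Fin n)) (i : Fin n), gfun w i x = 0 := by
    intro x i
    have hx := hG x
    have h1 := (Finset.sum_eq_zero_iff_of_nonneg
      (fun j (_ : j ∈ Finset.univ) => sq_nonneg (gfun w j x))).1 hx i (Finset.mem_univ i)
    exact pow_eq_zero_iff two_ne_zero |>.1 h1
  have hfz : ∀ x, fderiv ℝ w x = 0 := by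
    intro x
    ext v
    have hv : v = ∑ i : Fin n, v i • EuclideanSpace.single i (1:ℝ) := by
      ext j
      have h1 : (∑ i : Fin n, v i • EuclideanSpace.single i (1:ℝ)) j
          = ∑ i : Fin n, (v i • EuclideanSpace.single i (1:ℝ)) j :=
        by rw [WithLp.ofLp_sum, Finset.sum_apply]
      rw [h1]
      simp [EuclideanSpace.single_apply]
    rw [ContinuousLinearMap.zero_apply]
    conv_lhs => rw [hv]
    rw [map_sum]
    apply Finset.sum_eq_zero
    intro i _
    rw [ContinuousLinearMap.map_smul]
    show v i • gfun w i x = 0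
    rw [hg0 x i, smul_zero]
  intro x y
  exact is_const_of_fderiv_eq_zero (hw.differentiable two_ne_zero) hfz x y
end

section
/- Let c > 0, d₁ > 0, and let U, V ∈ C²(ℝ) solve −d₁U'' + cU' = U(r(V) − ω) and cV' = U·G(V) on ℝ, with U bounded, U > 0, 0 < V < 1, G < 0 on (0,1), U(±∞) = 0, U'(±∞) = 0, V(−∞) = v_b, V(+∞) = V_∞ ∈ (0,1). Let Q be a primitive of v ↦ (ω − r(v))/G(v) on (0,1). Then Q(V_∞) = Q(v_b). -/
open Set Filter

theorem traveling_wave_final_state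
    (c d₁ ω vb Vinf : ℝ) (U V r G Q : ℝ → ℝ)
    (hc : 0 < c) (hd₁ : 0 < d₁)
    (hU2 : ContDiff ℝ 2 U) (hV2 : ContDiff ℝ 2 V)
    (hr : Continuous r) (hG : ContinuousOn G (Ioo 0 1))
    (heqU : ∀ x, -d₁ * deriv (deriv U) x + c * deriv U x = U x * (r (V x) - ω))
    (heqV : ∀ x, c * deriv V x = U x * G (V x))
    (hUb : ∃ C : ℝ, ∀ x, |U x| ≤ C)
    (hUpos : ∀ x, 0 < U x) (hVrange : ∀ x, V x ∈ Ioo (0:ℝ) 1)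
    (hGneg : ∀ v ∈ Ioo (0:ℝ) 1, G v < 0)
    (hUtop : Tendsto U atTop (nhds 0)) (hUbot : Tendsto U atBot (nhds 0))
    (hU'top : Tendsto (deriv U) atTop (nhds 0)) (hU'bot : Tendsto (deriv U) atBot (nhds 0))
    (hVbot : Tendsto V atBot (nhds vb)) (hVtop : Tendsto V atTop (nhds Vinf))
    (hvb : vb ∈ Ioo (0:ℝ) 1) (hVinf : Vinf ∈ Ioo (0:ℝ) 1)
    (hQ : ∀ v ∈ Ioo (0:ℝ) 1, HasDerivAt Q ((ω - r v) / G v) v) :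
    Q Vinf = Q vb := by
  have hc0 : c ≠ 0 := ne_of_gt hc
  have hU' : Differentiable ℝ (deriv U) := by
    have h2 : ContDiff ℝ ((1:ℕ∞) + 1) U := by exact_mod_cast hU2
    exact ((contDiff_succ_iff_deriv.mp h2).2.2.differentiable (by norm_num))
  have hUdiff : Differentiable ℝ U := hU2.differentiable (by norm_num)
  have hVdiff : Differentiable ℝ V := hV2.differentiable (by norm_num)
  set F : ℝ → ℝ := fun x => Q (V x) - (d₁ * deriv U x - c * U x) / c with hF
  have hFderiv : ∀ x, HasDerivAt F 0 x := by
    intro x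
    have hGx : G (V x) ≠ 0 := ne_of_lt (hGneg _ (hVrange x))
    have hV'x : deriv V x = U x * G (V x) / c := by
      field_simp
      linarith [heqV x]
    have h1 : HasDerivAt (fun y => Q (V y))
        ((ω - r (V x)) / G (V x) * deriv V x) x :=
      (hQ (V x) (hVrange x)).comp x (hVdiff x).hasDerivAt
    have h2 : HasDerivAt (fun y => (d₁ * deriv U y - c * U y) / c)
        ((d₁ * deriv (deriv U) x - c * deriv U x) / c) x := by
      exact (((hU' x).hasDerivAt.const_mul d₁).sub
        ((hUdiff x).hasDerivAt.const_mul c)).div_const c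
    have := h1.sub h2
    refine this.congr_deriv ?_
    rw [hV'x]
    have hU'' : d₁ * deriv (deriv U) x - c * deriv U x = U x * (ω - r (V x)) := by
      linarith [heqU x]
    rw [hU'']
    field_simp
    ring
  have hFconst : ∀ x y, F x = F y := fun x y =>
    is_const_of_deriv_eq_zero (fun z => (hFderiv z).differentiableAt)
      (fun z => (hFderiv z).deriv) x y
  have hQcontTop : Tendsto (fun x => Q (V x)) atTop (nhds (Q Vinf)) :=
    ((hQ Vinf hVinf).continuousAt.tendsto).comp hVtop
  have hQcontBot : Tendsto (fun x => Q (V x)) atBot (nhds (Q vb)) :=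
    ((hQ vb hvb).continuousAt.tendsto).comp hVbot
  have hFtop : Tendsto F atTop (nhds (Q Vinf - (d₁ * 0 - c * 0) / c)) :=
    hQcontTop.sub ((((hU'top.const_mul d₁).sub (hUtop.const_mul c)).div_const c))
  have hFbot : Tendsto F atBot (nhds (Q vb - (d₁ * 0 - c * 0) / c)) :=
    hQcontBot.sub ((((hU'bot.const_mul d₁).sub (hUbot.const_mul c)).div_const c))
  have hFc : Tendsto F atTop (nhds (F 0)) := by
    have : F = fun _ => F 0 := funext fun x => hFconst x 0
    rw [this]; exact tendsto_const_nhds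
  have hFc' : Tendsto F atBot (nhds (F 0)) := by
    have : F = fun _ => F 0 := funext fun x => hFconst x 0
    rw [this]; exact tendsto_const_nhds
  have e1 : Q Vinf - (d₁ * 0 - c * 0) / c = F 0 := tendsto_nhds_unique hFtop hFc
  have e2 : Q vb - (d₁ * 0 - c * 0) / c = F 0 := tendsto_nhds_unique hFbot hFc'
  have := e1.trans e2.symm
  simpa using this
end
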